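/- arXiv:2101.03000 — 3 statements merged into one kernel-verified Lean document; each statement's English description precedes it below -/
import Mathlib

section
/- Turnpike cardinality bound (Proposition 2, trajectory form). Let n ∈ ℕ, let x_0, x_1, …, x_N ∈ ℝ^n be a finite sequence of points, let ℓ_0, …, ℓ_{N−1} be nonnegative real numbers, let x̄ ∈ ℝ^n, let λ : ℝ^n → ℝ, let Λ, V̂ ≥ 0 be constants, and let α be a class-K function. Assume: (i) the strict dissipation inequality λ(x_{k+1}) − λ(x_k) ≤ −α(‖x_k − x̄‖) + ℓ_k holds for every k ∈ {0, …, N−1}; (ii) λ(x_N) − λ(x_0) ≥ −Λ; (iii) Σ_{k=0}^{N−1} ℓ_k ≤ V̂. Then for every ε > 0, the cardinality of {k ∈ {0, …, N−1} : ‖x_k − x̄‖ > ε} is at most (Λ + V̂)/α(ε), and equivalently the cardinality of {k ∈ {0, …, N−1} : ‖x_k − x̄‖ ≤ ε} is at least N − (Λ + V̂)/α(ε). -/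
/-!
Summing the dissipation inequality telescopes `lam`, so `∑ α ‖x k - xbar‖ ≤ Λ + Vhat`.
Every step with `‖x k - xbar‖ > ε` contributes at least `α ε > 0` to this sum and the other
steps contribute nonnegatively, so there are at most `(Λ + Vhat) / α ε` of them.
-/

/-- A function `α : [0,∞) → [0,∞)` is of class K if it is continuous, strictly
increasing and satisfies `α 0 = 0`. -/
def IsClassK (α : ℝ → ℝ) : Prop :=
  ContinuousOn α (Set.Ici 0) ∧ StrictMonoOn α (Set.Ici 0) ∧ α 0 = 0

open Finset

namespace IsClassK

variable {α : ℝ → ℝ} (hα : IsClassK α)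
include hα

theorem nonneg {t : ℝ} (ht : 0 ≤ t) : 0 ≤ α t := by
  simpa [hα.2.2] using hα.2.1.monotoneOn Set.self_mem_Ici ht ht

theorem pos {t : ℝ} (ht : 0 < t) : 0 < α t := by
  simpa [hα.2.2] using hα.2.1 Set.self_mem_Ici ht.le ht

theorem lt {s t : ℝ} (hs : 0 ≤ s) (hst : s < t) : α s < α t :=
  hα.2.1 hs (hs.trans hst.le) hst

end IsClassK

theorem sum_le_sum_add_sub_of_dissipation {V s ℓ : ℕ → ℝ} {N : ℕ}
    (h : ∀ k < N, V (k + 1) - V k ≤ -s k + ℓ k) :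
    ∑ k ∈ range N, s k ≤ ∑ k ∈ range N, ℓ k + (V 0 - V N) := by
  have htel : ∑ k ∈ range N, (V (k + 1) - V k) = V N - V 0 := sum_range_sub V N
  have hle : ∑ k ∈ range N, s k ≤ ∑ k ∈ range N, (ℓ k - (V (k + 1) - V k)) :=
    sum_le_sum fun k hk => by linarith [h k (mem_range.mp hk)]
  rw [sum_sub_distrib, htel] at hle
  linarith

theorem Finset.card_filter_mul_le_sum {ι R : Type*} [CommSemiring R] [PartialOrder R]
    [IsOrderedRing R] (s : Finset ι) (p : ι → Prop) [DecidablePred p] {f : ι → R} {a : R}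
    (hf : ∀ i ∈ s, 0 ≤ f i) (ha : ∀ i ∈ s, p i → a ≤ f i) :
    (#(s.filter p) : R) * a ≤ ∑ i ∈ s, f i :=
  calc (#(s.filter p) : R) * a = #(s.filter p) • a := (nsmul_eq_mul _ _).symm
    _ ≤ ∑ i ∈ s.filter p, f i :=
      card_nsmul_le_sum _ _ _ fun i hi => ha i (mem_filter.mp hi).1 (mem_filter.mp hi).2
    _ ≤ ∑ i ∈ s, f i := sum_le_sum_of_subset_of_nonneg (filter_subset _ _) fun i hi _ => hf i hi

theorem turnpike_cardinality_bound_general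
    (n N : ℕ) (x : ℕ → EuclideanSpace ℝ (Fin n)) (ℓ : ℕ → ℝ)
    (xbar : EuclideanSpace ℝ (Fin n)) (lam : EuclideanSpace ℝ (Fin n) → ℝ)
    (Λ Vhat : ℝ)
    (α : ℝ → ℝ) (hα : IsClassK α)
    (hdiss : ∀ k < N, lam (x (k + 1)) - lam (x k) ≤ -α ‖x k - xbar‖ + ℓ k)
    (hlow : -Λ ≤ lam (x N) - lam (x 0))
    (hsum : ∑ k ∈ Finset.range N, ℓ k ≤ Vhat) :
    ∀ ε > 0,
      (((Finset.range N).filter (fun k => ε < ‖x k - xbar‖)).card : ℝ)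
          ≤ (Λ + Vhat) / α ε ∧
      (N : ℝ) - (Λ + Vhat) / α ε
          ≤ ((Finset.range N).filter (fun k => ‖x k - xbar‖ ≤ ε)).card := by
  intro ε hε
  have hdecay : ∑ k ∈ range N, α ‖x k - xbar‖ ≤ Λ + Vhat := by
    linarith [sum_le_sum_add_sub_of_dissipation (V := fun k => lam (x k)) hdiss]
  have hcount : (#((range N).filter (fun k => ε < ‖x k - xbar‖)) : ℝ) * α ε ≤ Λ + Vhat :=
    (card_filter_mul_le_sum _ _ (fun k _ => hα.nonneg (norm_nonneg _))
      (fun k _ hk => (hα.lt hε.le hk).le)).trans hdecay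
  have hfar : (#((range N).filter (fun k => ε < ‖x k - xbar‖)) : ℝ) ≤ (Λ + Vhat) / α ε :=
    (le_div_iff₀ (hα.pos hε)).mpr hcount
  have hsplit := card_filter_add_card_filter_not (s := range N) (p := fun k => ε < ‖x k - xbar‖)
  simp only [not_lt, card_range] at hsplit
  have hsplit_real := congrArg (Nat.cast (R := ℝ)) hsplit
  push_cast at hsplit_real
  exact ⟨hfar, by linarith⟩

/-- Turnpike cardinality bound (Proposition 2, trajectory form). -/
theorem turnpike_cardinality_bound
    (n N : ℕ) (x : ℕ → EuclideanSpace ℝ (Fin n)) (ℓ : ℕ → ℝ)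
    (xbar : EuclideanSpace ℝ (Fin n)) (lam : EuclideanSpace ℝ (Fin n) → ℝ)
    (Λ Vhat : ℝ) (hΛ : 0 ≤ Λ) (hVhat : 0 ≤ Vhat)
    (α : ℝ → ℝ) (hα : IsClassK α)
    (hℓ : ∀ k < N, 0 ≤ ℓ k)
    (hdiss : ∀ k < N, lam (x (k + 1)) - lam (x k) ≤ -α ‖x k - xbar‖ + ℓ k)
    (hlow : -Λ ≤ lam (x N) - lam (x 0))
    (hsum : ∑ k ∈ Finset.range N, ℓ k ≤ Vhat) :
    ∀ ε > 0,
      (((Finset.range N).filter (fun k => ε < ‖x k - xbar‖)).card : ℝ)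
          ≤ (Λ + Vhat) / α ε ∧
      (N : ℝ) - (Λ + Vhat) / α ε
          ≤ ((Finset.range N).filter (fun k => ‖x k - xbar‖ ≤ ε)).card :=
  turnpike_cardinality_bound_general n N x ℓ xbar lam Λ Vhat α hα hdiss hlow hsum
end

section
/- Near-zero loss with finite depth for the squared-distance classification loss (quantitative form of Corollary 1): take the loss ℓ_f(x) = ‖x − x̄‖², whose unique unconstrained minimizer is x̄. Let ℓ : X × U → [0,∞) be a nonnegative stage cost, γ > 0, N ∈ ℕ, and suppose there exists a length-N control sequence ũ whose trajectory x̃ from x_0 under the residual network dynamics satisfies x̃_N = x̄ (zero loss), with accumulated regularization cost C := Σ_{k=0}^{N−1} ℓ(x̃_k, ũ_k). Then every optimal pair (x*, u*) for the total cost J_N^γ satisfies ‖x*_N − x̄‖ ≤ √(C/γ); in particular, for every ε > 0, choosing γ ≥ C/ε² guarantees that the distance from x*_N to the set of unconstrained minimizers of ℓ_f is at most ε. -/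
noncomputable section

/-- The stacked state space `X = (ℝ^d)^D` with the stacked Euclidean norm. -/
abbrev StateX (d D : ℕ) := EuclideanSpace ℝ (Fin D × Fin d)

/-- A control is a weight pair `u = (A, b) ∈ ℝ^{d×d} × ℝ^d`. -/
abbrev Ctrl (d : ℕ) := Matrix (Fin d) (Fin d) ℝ × (Fin d → ℝ)

/-- Residual network ensemble dynamics: every block is updated by
`xⁱ ↦ xⁱ + σ(A xⁱ + b)`, with `σ` applied componentwise. -/
def resDyn {d D : ℕ} (σ : ℝ → ℝ) (x : StateX d D) (u : Ctrl d) : StateX d D :=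
  WithLp.toLp 2 (fun p => x p + σ ((∑ l, u.1 p.2 l * x (p.1, l)) + u.2 p.2))

/-- Trajectory generated by a control sequence from the initial state `x0`. -/
def traj {d D : ℕ} (σ : ℝ → ℝ) (x0 : StateX d D) (u : ℕ → Ctrl d) : ℕ → StateX d D
  | 0 => x0
  | k + 1 => resDyn σ (traj σ x0 u k) (u k)

/-- Total cost `J_N^γ` of a control sequence for the training optimal control problem. -/
def totalCost {d D : ℕ} (σ : ℝ → ℝ) (x0 : StateX d D)
    (ℓ : StateX d D → Ctrl d → ℝ) (ℓf : StateX d D → ℝ) (γ : ℝ) (N : ℕ)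
    (u : ℕ → Ctrl d) : ℝ :=
  (∑ k ∈ Finset.range N, ℓ (traj σ x0 u k) (u k)) + γ * ℓf (traj σ x0 u N)

/-! Comparing the optimal control with the zero-loss control `ũ`: since the stage costs are
nonnegative, `γ ‖x*_N − x̄‖² ≤ J(u*) ≤ J(ũ) = C`. -/

theorem mul_terminalCost_le_totalCost {d D : ℕ} {σ : ℝ → ℝ} {x0 : StateX d D}
    {ℓ : StateX d D → Ctrl d → ℝ} (hℓ : ∀ x u, 0 ≤ ℓ x u) (ℓf : StateX d D → ℝ) (γ : ℝ) (N : ℕ)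
    (u : ℕ → Ctrl d) :
    γ * ℓf (traj σ x0 u N) ≤ totalCost σ x0 ℓ ℓf γ N u :=
  le_add_of_nonneg_left (Finset.sum_nonneg fun _ _ => hℓ _ _)

theorem totalCost_eq_sum_of_terminalCost_eq_zero {d D : ℕ} {σ : ℝ → ℝ} {x0 : StateX d D}
    {ℓ : StateX d D → Ctrl d → ℝ} {ℓf : StateX d D → ℝ} {γ : ℝ} {N : ℕ} {u : ℕ → Ctrl d}
    (h : ℓf (traj σ x0 u N) = 0) :
    totalCost σ x0 ℓ ℓf γ N u = ∑ k ∈ Finset.range N, ℓ (traj σ x0 u k) (u k) := by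
  rw [totalCost, h, mul_zero, add_zero]

theorem le_sqrt_div_of_mul_sq_le {r γ C : ℝ} (hγ : 0 < γ) (h : γ * r ^ 2 ≤ C) :
    r ≤ √(C / γ) := by
  have hsq : r ^ 2 ≤ C / γ := by rw [le_div_iff₀ hγ]; linarith
  exact (le_abs_self r).trans (Real.abs_le_sqrt hsq)

theorem sqrt_div_le_of_div_sq_le {ε γ C : ℝ} (hε : 0 < ε) (hγ : 0 < γ) (h : C / ε ^ 2 ≤ γ) :
    √(C / γ) ≤ ε := by
  rw [Real.sqrt_le_left hε.le, div_le_iff₀ hγ]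
  rw [div_le_iff₀ (by positivity)] at h
  linarith

/-- Near-zero loss with finite depth for the squared-distance classification
loss `ℓ_f(x) = ‖x − x̄‖²` (quantitative form of Corollary 1). -/
theorem near_zero_loss_squared_distance {d D : ℕ} (σ : ℝ → ℝ)
    (ℓ : StateX d D → Ctrl d → ℝ) (hℓ : ∀ x u, 0 ≤ ℓ x u)
    (xbar x0 : StateX d D) (γ : ℝ) (hγ : 0 < γ) (N : ℕ)
    (util : ℕ → Ctrl d) (hreach : traj σ x0 util N = xbar)
    (C : ℝ) (hC : C = ∑ k ∈ Finset.range N, ℓ (traj σ x0 util k) (util k))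
    (ustar : ℕ → Ctrl d)
    (hopt : ∀ u : ℕ → Ctrl d,
      totalCost σ x0 ℓ (fun x => ‖x - xbar‖ ^ 2) γ N ustar
        ≤ totalCost σ x0 ℓ (fun x => ‖x - xbar‖ ^ 2) γ N u) :
    ‖traj σ x0 ustar N - xbar‖ ≤ Real.sqrt (C / γ) ∧
    ∀ ε > 0, C / ε ^ 2 ≤ γ → ‖traj σ x0 ustar N - xbar‖ ≤ ε := by
  have hterm : γ * ‖traj σ x0 ustar N - xbar‖ ^ 2 ≤ C :=
    calc γ * ‖traj σ x0 ustar N - xbar‖ ^ 2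
        ≤ totalCost σ x0 ℓ (fun x => ‖x - xbar‖ ^ 2) γ N ustar :=
          mul_terminalCost_le_totalCost hℓ (fun x => ‖x - xbar‖ ^ 2) γ N ustar
      _ ≤ totalCost σ x0 ℓ (fun x => ‖x - xbar‖ ^ 2) γ N util := hopt util
      _ = C := by
          rw [totalCost_eq_sum_of_terminalCost_eq_zero (by simp [hreach]), hC]
  have hdist := le_sqrt_div_of_mul_sq_le hγ hterm
  exact ⟨hdist, fun ε hε hγε => hdist.trans (sqrt_div_le_of_div_sq_le hε hγ hγε)⟩
end
end

section
/- Transferring depth bounds between regularization norms (core of Proposition 3): assume σ : ℝ → ℝ satisfies σ(0) = 0. Fix an admissible parametrization π = (s_x, s_u, p_x, p_u, q, r) with q, r > 0, p_x, p_u ∈ (1, ∞], s_x, s_u > 1, and define the stage cost ℓ_π(x,u) = r‖u‖_{p_u}^{s_u} + q‖x − x̄‖_{p_x}^{s_x}, where ‖·‖_p denotes the coordinatewise p-norm on the stacked vectors. Suppose there is a length-M control sequence û with trajectory x̂ from x_0 under the residual network dynamics satisfying x̂_M = x̄, and set Ṽ := Σ_{k=0}^{M−1} ℓ_π(x̂_k,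 û_k). Then: (a) for every horizon N ≥ M, extending û by N − M zero controls yields a length-N control sequence from x_0 with terminal state x̄ and accumulated cost Σ_{k=0}^{N−1} ℓ_π equal to Ṽ; hence the infimum of the π-regularization cost over length-N control sequences from x_0 is at most Ṽ; (b) consequently, for any nonnegative terminal loss ℓ_f with ℓ_f(x̄) = 0 and any γ > 0, every optimal pair (x*, u*) for the total cost Σ_{k=0}^{N−1} ℓ_π(x_k, u_k) + γ ℓ_f(x_N) with N ≥ M satisfies, for every ε > 0, card{k ∈ {0, …, N−1} : ‖x*_k − x̄‖_{p_x} > ε} ≤ Ṽ/(q·ε^{s_x}). -/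
/-!
Since `σ 0 = 0`, the zero control leaves every state fixed, so padding the reaching controls `û`
with zeros gives, for every `N ≥ M`, a control sequence that stays at `x̄` from step `M` on, costs
nothing after step `M`, and hence has cost `Ṽ` and zero terminal loss. An optimal pair therefore has
regularization cost at most `Ṽ`, while every stage whose state is more than `ε` away from `x̄`
contributes at least `q ε^{s_x}` to that cost: a Markov-type count.
-/

noncomputable section

open scoped ENNReal

/-- The coordinatewise `ℓ^p` norm of a finite family of reals, `p ∈ [1, ∞]`
(`‖v‖_∞` is the maximum absolute coordinate). -/
noncomputable def lpNorm {ι : Type*} [Fintype ι] (p : ℝ≥0∞) (v : ι → ℝ) : ℝ :=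
  if p = ⊤ then ⨆ i, |v i| else (∑ i, |v i| ^ p.toReal) ^ (1 / p.toReal)

/-- The coordinate vector (in `ℝ^{d²+d}`) of a control `u = (A, b)`. -/
def ctrlCoords {d : ℕ} (u : Ctrl d) : (Fin d × Fin d) ⊕ Fin d → ℝ :=
  Sum.elim (fun jl => u.1 jl.1 jl.2) u.2

/-- Stage cost `ℓ_π(x,u) = r‖u‖_{p_u}^{s_u} + q‖x − x̄‖_{p_x}^{s_x}` for the
admissible parametrization `π = (s_x, s_u, p_x, p_u, q, r)`. -/
noncomputable def stageCost {d D : ℕ} (px pu : ℝ≥0∞) (sx su q r : ℝ)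
    (xbar : StateX d D) (x : StateX d D) (u : Ctrl d) : ℝ :=
  r * lpNorm pu (ctrlCoords u) ^ su + q * lpNorm px (fun p => x p - xbar p) ^ sx

def zeroExtend {d : ℕ} (u : ℕ → Ctrl d) (M : ℕ) : ℕ → Ctrl d :=
  fun k => if k < M then u k else (0, 0)

section Dynamics

variable {d D : ℕ} {σ : ℝ → ℝ}

lemma resDyn_zero_ctrl (hσ0 : σ 0 = 0) (x : StateX d D) : resDyn σ x (0, 0) = x := by
  ext p
  simp [resDyn, hσ0]

lemma traj_congr_of_lt {x0 : StateX d D} {u v : ℕ → Ctrl d} {M : ℕ}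
    (huv : ∀ k < M, u k = v k) : ∀ k ≤ M, traj σ x0 u k = traj σ x0 v k
  | 0, _ => rfl
  | k + 1, hk => by
    simp only [traj, traj_congr_of_lt huv k (Nat.le_of_succ_le hk), huv k hk]

lemma traj_zeroExtend_of_le (x0 : StateX d D) (u : ℕ → Ctrl d) {M k : ℕ} (hk : k ≤ M) :
    traj σ x0 (zeroExtend u M) k = traj σ x0 u k :=
  traj_congr_of_lt (fun _ hj => if_pos hj) k hk

lemma traj_zeroExtend_of_ge (hσ0 : σ 0 = 0) (x0 : StateX d D) (u : ℕ → Ctrl d) {M k : ℕ}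
    (hk : M ≤ k) : traj σ x0 (zeroExtend u M) k = traj σ x0 u M := by
  induction k, hk using Nat.le_induction with
  | base => exact traj_zeroExtend_of_le x0 u le_rfl
  | succ k hk ih =>
    rw [traj, ih, zeroExtend, if_neg hk.not_gt, resDyn_zero_ctrl hσ0]

lemma sum_range_zeroExtend {β : Type*} [AddCommMonoid β] (hσ0 : σ 0 = 0) (x0 : StateX d D)
    (u : ℕ → Ctrl d) {M N : ℕ} (g : StateX d D → Ctrl d → β)
    (hg : g (traj σ x0 u M) (0, 0) = 0) (hN : M ≤ N) :
    ∑ k ∈ Finset.range N, g (traj σ x0 (zeroExtend u M) k) (zeroExtend u M k) =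
      ∑ k ∈ Finset.range M, g (traj σ x0 u k) (u k) := by
  rw [← Finset.sum_range_add_sum_Ico _ hN]
  have htail : ∀ k ∈ Finset.Ico M N,
      g (traj σ x0 (zeroExtend u M) k) (zeroExtend u M k) = 0 := fun k hk => by
    have hMk := (Finset.mem_Ico.mp hk).1
    rw [traj_zeroExtend_of_ge hσ0 x0 u hMk, zeroExtend, if_neg hMk.not_gt, hg]
  rw [Finset.sum_eq_zero htail, add_zero]
  refine Finset.sum_congr rfl fun k hk => ?_
  have hkM := Finset.mem_range.mp hk
  rw [traj_zeroExtend_of_le x0 u hkM.le, zeroExtend, if_pos hkM]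

end Dynamics

section Cost

variable {ι : Type*} [Fintype ι]

lemma lpNorm_nonneg (p : ℝ≥0∞) (v : ι → ℝ) : 0 ≤ lpNorm p v := by
  unfold lpNorm
  split
  · exact Real.iSup_nonneg fun i => abs_nonneg _
  · exact Real.rpow_nonneg (Finset.sum_nonneg fun i _ => Real.rpow_nonneg (abs_nonneg _) _) _

lemma lpNorm_zero {p : ℝ≥0∞} (hp : p ≠ 0) : lpNorm p (0 : ι → ℝ) = 0 := by
  unfold lpNorm
  split
  · simp
  · rename_i hp_top
    have hp_pos : 0 < p.toReal := ENNReal.toReal_pos hp hp_top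
    simp [Real.zero_rpow hp_pos.ne', Real.zero_rpow (inv_ne_zero hp_pos.ne')]

lemma ctrlCoords_zero {d : ℕ} : ctrlCoords ((0, 0) : Ctrl d) = 0 := by
  ext (jl | j) <;> rfl

variable {d D : ℕ} {px pu : ℝ≥0∞} {sx su q r : ℝ}

lemma stageCost_nonneg (hq : 0 ≤ q) (hr : 0 ≤ r) (xbar x : StateX d D) (u : Ctrl d) :
    0 ≤ stageCost px pu sx su q r xbar x u :=
  add_nonneg (mul_nonneg hr (Real.rpow_nonneg (lpNorm_nonneg _ _) _))
    (mul_nonneg hq (Real.rpow_nonneg (lpNorm_nonneg _ _) _))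

lemma stageCost_self_zero_ctrl (hpx : px ≠ 0) (hpu : pu ≠ 0) (hsx : sx ≠ 0) (hsu : su ≠ 0)
    (xbar : StateX d D) : stageCost px pu sx su q r xbar xbar (0, 0) = 0 := by
  have hdiff : (fun p => xbar p - xbar p) = 0 := funext fun p => sub_self _
  rw [stageCost, hdiff, ctrlCoords_zero, lpNorm_zero hpx, lpNorm_zero hpu,
    Real.zero_rpow hsx, Real.zero_rpow hsu, mul_zero, mul_zero, add_zero]

lemma mul_rpow_le_stageCost (hq : 0 ≤ q) (hr : 0 ≤ r) (hsx : 0 ≤ sx) {ε : ℝ} (hε : 0 ≤ ε)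
    {xbar x : StateX d D} (hx : ε ≤ lpNorm px (fun p => x p - xbar p)) (u : Ctrl d) :
    q * ε ^ sx ≤ stageCost px pu sx su q r xbar x u := by
  have hu : 0 ≤ r * lpNorm pu (ctrlCoords u) ^ su :=
    mul_nonneg hr (Real.rpow_nonneg (lpNorm_nonneg _ _) _)
  have hx' : q * ε ^ sx ≤ q * lpNorm px (fun p => x p - xbar p) ^ sx :=
    mul_le_mul_of_nonneg_left (Real.rpow_le_rpow hε hx hsx) hq
  unfold stageCost
  linarith

end Cost

lemma card_filter_nsmul_le_sum {ι M : Type*} [AddCommMonoid M] [PartialOrder M]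
    [IsOrderedAddMonoid M] (s : Finset ι) (P : ι → Prop) [DecidablePred P] (f : ι → M) (c : M)
    (hf : ∀ i ∈ s, 0 ≤ f i) (hc : ∀ i ∈ s, P i → c ≤ f i) :
    (s.filter P).card • c ≤ ∑ i ∈ s, f i :=
  calc (s.filter P).card • c
      ≤ ∑ i ∈ s.filter P, f i :=
        Finset.card_nsmul_le_sum _ _ _ fun i hi => hc i (Finset.mem_filter.mp hi).1
          (Finset.mem_filter.mp hi).2
    _ ≤ ∑ i ∈ s, f i :=
        Finset.sum_le_sum_of_subset_of_nonneg (Finset.filter_subset _ _) fun i hi _ => hf i hi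

/-- Transferring depth bounds between regularization norms
(core of Proposition 3). -/
theorem transfer_depth_bounds_between_norms {d D : ℕ}
    (σ : ℝ → ℝ) (hσ0 : σ 0 = 0)
    (q r sx su : ℝ) (px pu : ℝ≥0∞)
    (hq : 0 < q) (hr : 0 < r) (hpx : 1 < px) (hpu : 1 < pu)
    (hsx : 1 < sx) (hsu : 1 < su)
    (xbar x0 : StateX d D) (M : ℕ) (uhat : ℕ → Ctrl d)
    (hreach : traj σ x0 uhat M = xbar)
    (Vt : ℝ) (hVt : Vt = ∑ k ∈ Finset.range M,
        stageCost px pu sx su q r xbar (traj σ x0 uhat k) (uhat k)) :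
    (∀ N : ℕ, M ≤ N →
      (traj σ x0 (fun k => if k < M then uhat k else (0, 0)) N = xbar ∧
        ∑ k ∈ Finset.range N,
          stageCost px pu sx su q r xbar
            (traj σ x0 (fun j => if j < M then uhat j else (0, 0)) k)
            (if k < M then uhat k else (0, 0)) = Vt) ∧
      sInf {c : ℝ | ∃ u : ℕ → Ctrl d,
          c = ∑ k ∈ Finset.range N,
            stageCost px pu sx su q r xbar (traj σ x0 u k) (u k)} ≤ Vt) ∧
    (∀ (ℓf : StateX d D → ℝ), (∀ x, 0 ≤ ℓf x) → ℓf xbar = 0 →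
      ∀ γ : ℝ, 0 < γ → ∀ N : ℕ, M ≤ N → ∀ ustar : ℕ → Ctrl d,
        (∀ u : ℕ → Ctrl d,
          (∑ k ∈ Finset.range N,
              stageCost px pu sx su q r xbar (traj σ x0 ustar k) (ustar k))
            + γ * ℓf (traj σ x0 ustar N)
          ≤ (∑ k ∈ Finset.range N,
              stageCost px pu sx su q r xbar (traj σ x0 u k) (u k))
            + γ * ℓf (traj σ x0 u N)) →
        ∀ ε : ℝ, 0 < ε →
          (((Finset.range N).filter
              (fun k => ε < lpNorm px
                (fun p => traj σ x0 ustar k p - xbar p))).card : ℝ)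
            ≤ Vt / (q * ε ^ sx)) := by
  have hpx0 : px ≠ 0 := (zero_lt_one.trans hpx).ne'
  have hpu0 : pu ≠ 0 := (zero_lt_one.trans hpu).ne'
  have hext : ∀ N, M ≤ N → traj σ x0 (zeroExtend uhat M) N = xbar := fun N hN =>
    (traj_zeroExtend_of_ge hσ0 x0 uhat hN).trans hreach
  have hcost : ∀ N, M ≤ N → ∑ k ∈ Finset.range N, stageCost px pu sx su q r xbar
      (traj σ x0 (zeroExtend uhat M) k) (zeroExtend uhat M k) = Vt := fun N hN => by
    rw [hVt]
    refine sum_range_zeroExtend hσ0 x0 uhat _ ?_ hN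
    rw [hreach]
    exact stageCost_self_zero_ctrl hpx0 hpu0 (zero_lt_one.trans hsx).ne'
      (zero_lt_one.trans hsu).ne' xbar
  refine ⟨fun N hN => ⟨⟨hext N hN, hcost N hN⟩, csInf_le ⟨0, ?_⟩ ⟨_, (hcost N hN).symm⟩⟩, ?_⟩
  · rintro _ ⟨u, rfl⟩
    exact Finset.sum_nonneg fun k _ => stageCost_nonneg hq.le hr.le _ _ _
  intro ℓf hℓf hℓf_xbar γ hγ N hN ustar hopt ε hε
  have hopt_le : ∑ k ∈ Finset.range N,
      stageCost px pu sx su q r xbar (traj σ x0 ustar k) (ustar k) ≤ Vt := by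
    have hcmp := hopt (zeroExtend uhat M)
    rw [hcost N hN, hext N hN, hℓf_xbar, mul_zero, add_zero] at hcmp
    linarith [mul_nonneg hγ.le (hℓf (traj σ x0 ustar N))]
  rw [le_div_iff₀ (mul_pos hq (Real.rpow_pos_of_pos hε sx)), ← nsmul_eq_mul]
  refine (card_filter_nsmul_le_sum _ _ _ _ (fun k _ => stageCost_nonneg hq.le hr.le _ _ _)
    fun k _ hk => ?_).trans hopt_le
  exact mul_rpow_le_stageCost hq.le hr.le (zero_le_one.trans hsx.le) hε.le hk.le _
end
end
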